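/- With the glued space (Z, d_Z) as above, fix j ∈ ℕ and let W_j = ⋃_{k ≥ j} ζ_k(Z_k) ⊂ Z be the union of the sheets with index at least j. Then the map F_j : (W_j, d_Z) → (X, d_j) defined by F_j(ζ_k(x,t)) = x (for k ≥ j, x ∈ X, t ∈ [0, h_k]) is well defined and 1-Lipschitz: d_j(F_j(z_1), F_j(z_2)) ≤ d_Z(z_1, z_2) for all z_1, z_2 ∈ W_j. -/
import Mathlib


/-- The distance on the sheet `Z_j = X × [0, h_j]` (with `h_j = ε j / 2`). -/
noncomputable def sheetD {X : Type*} [MetricSpace X]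
    (d : ℕ → X → X → ℝ) (ε : ℕ → ℝ) (j : ℕ) (z w : X × ℝ) : ℝ :=
  min (dist z.1 w.1 + |z.2 - w.2|)
    ((ε j / 2 - z.2) + (ε j / 2 - w.2) + d j z.1 w.1)

/-- The glued space `Z`: the common spine `X × {0}` together with the open parts
`X × (0, h_j]` of the sheets. -/
def Glued (X : Type*) (ε : ℕ → ℝ) : Type _ :=
  X ⊕ (Σ j : ℕ, X × {t : ℝ // t ∈ Set.Ioc 0 (ε j / 2)})

/-- The glued distance `d_Z` on `Z`. -/
noncomputable def gluedD {X : Type*} [MetricSpace X]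
    (d : ℕ → X → X → ℝ) (ε : ℕ → ℝ) : Glued X ε → Glued X ε → ℝ := fun z w =>
  match z, w with
  | .inl x, .inl y => dist x y
  | .inl x, .inr ⟨k, y, t⟩ => sheetD d ε k (x, 0) (y, (t : ℝ))
  | .inr ⟨k, y, t⟩, .inl x => sheetD d ε k (y, (t : ℝ)) (x, 0)
  | .inr ⟨j, x, s⟩, .inr ⟨k, y, t⟩ =>
      if j = k then sheetD d ε j (x, (s : ℝ)) (y, (t : ℝ))
      else ⨅ p : X, (sheetD d ε j (x, (s : ℝ)) (p, 0) + sheetD d ε k (p, 0) (y, (t : ℝ)))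

/-- The subset `W_j = ⋃_{k ≥ j} ζ_k(Z_k) ⊂ Z`: all sheets of index at least `j`
together with the spine. -/
def Wset (X : Type*) (ε : ℕ → ℝ) (j : ℕ) : Set (Glued X ε) :=
  {z | match z with
    | .inl _ => True
    | .inr q => j ≤ q.1}

/-- The projection `F_j(ζ_k(x,t)) = x` from the glued space back to `X`. -/
def gluedProj {X : Type*} {ε : ℕ → ℝ} : Glued X ε → X := fun z =>
  match z with
  | .inl x => x
  | .inr q => q.2.1

/-- For each `j`, the projection `F_j : (W_j, d_Z) → (X, d_j)`,
`F_j(ζ_k(x,t)) = x` for `k ≥ j`, is `1`-Lipschitz: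
`d_j(F_j z₁, F_j z₂) ≤ d_Z(z₁, z₂)`. -/
theorem gluedProj_one_lipschitz
    {X : Type*} [MetricSpace X] [CompactSpace X] [Nonempty X]
    (d : ℕ → X → X → ℝ) (ε : ℕ → ℝ)
    (hnonneg : ∀ j x y, 0 ≤ d j x y)
    (hself : ∀ j x, d j x x = 0)
    (hdef : ∀ j x y, d j x y = 0 → x = y)
    (hsymm : ∀ j x y, d j x y = d j y x)
    (htri : ∀ j x y z, d j x z ≤ d j x y + d j y z)
    (hmono : ∀ j x y, d j x y ≤ d (j + 1) x y)
    (hle : ∀ j x y, d j x y ≤ dist x y)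
    (herr : ∀ j x y, dist x y - d j x y ≤ ε j)
    (hεpos : ∀ j, 0 < ε j)
    (hεanti : Antitone ε)
    (hε0 : Filter.Tendsto ε Filter.atTop (nhds 0)) :
    ∀ j : ℕ, ∀ z₁ ∈ Wset X ε j, ∀ z₂ ∈ Wset X ε j,
      d j (gluedProj z₁) (gluedProj z₂) ≤ gluedD d ε z₁ z₂ := by
  intro j z₁ hz₁ z₂ hz₂
  have hmono' : ∀ k, j ≤ k → ∀ x y, d j x y ≤ d k x y := fun k hk x y =>
    monotone_nat_of_le_succ (f := fun n => d n x y) (fun n => hmono n x y) hk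
  have key : ∀ k, j ≤ k → ∀ (x y : X) (s t : ℝ), 0 ≤ s → s ≤ ε k / 2 →
      0 ≤ t → t ≤ ε k / 2 → d j x y ≤ sheetD d ε k (x, s) (y, t) := by
    intro k hk x y s t hs hs' ht ht'
    unfold sheetD
    refine le_min ?_ ?_
    · exact le_trans (hle j x y) (le_add_of_nonneg_right (abs_nonneg _))
    · have h1 : 0 ≤ ε k / 2 - s := by linarith
      have h2 : 0 ≤ ε k / 2 - t := by linarith
      have := hmono' k hk x y
      simp only []
      linarith
  have hεj2 : (0:ℝ) ≤ ε j / 2 := by have := hεpos j; linarith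
  match z₁, z₂ with
  | .inl x, .inl y =>
    simpa [gluedProj, gluedD] using hle j x y
  | .inl x, .inr ⟨k, y, t⟩ =>
    have hk : j ≤ k := hz₂
    exact key k hk x y 0 t le_rfl (by have := hεpos k; linarith) t.2.1.le t.2.2
  | .inr ⟨k, y, t⟩, .inl x =>
    have hk : j ≤ k := hz₁
    exact key k hk y x t 0 t.2.1.le t.2.2 le_rfl (by have := hεpos k; linarith)
  | .inr ⟨k₁, x, s⟩, .inr ⟨k₂, y, t⟩ =>
    have hk₁ : j ≤ k₁ := hz₁
    have hk₂ : j ≤ k₂ := hz₂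
    show d j x y ≤ if k₁ = k₂ then _ else _
    split
    · next h =>
      subst h
      exact key k₁ hk₁ x y s t s.2.1.le s.2.2 t.2.1.le t.2.2
    · refine le_ciInf fun p => ?_
      calc d j x y ≤ d j x p + d j p y := htri j x p y
        _ ≤ _ := add_le_add
            (key k₁ hk₁ x p s 0 s.2.1.le s.2.2 le_rfl (by have := hεpos k₁; linarith))
            (key k₂ hk₂ p y 0 t le_rfl (by have := hεpos k₂; linarith) t.2.1.le t.2.2)
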